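/- arXiv:1307.0654 — 4 statements merged into one kernel-verified Lean document; each statement's English description precedes it below -/
import Mathlib

section
/- Let K ⊂ ℂ be compact, μ a positive finite Borel measure supported on K, 1 ≤ q < ∞, and let A^q(K,μ) denote the closure in L^q(μ) of A(K), the algebra of functions continuous on K and analytic on the interior of K. If f ∈ L^∞(μ) ∩ A^q(K,μ) and g ∈ A^q(K,μ), then the product fg belongs to A^q(K,μ). -/
open MeasureTheory Filter Topology Set ENNReal

noncomputable section

/-- `A(K)`: functions continuous on `K` and analytic on the interior of `K`. -/
def AK (K : Set ℂ) : Set (ℂ → ℂ) :=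
  {f | ContinuousOn f K ∧ DifferentiableOn ℂ f (interior K)}

/-- `A^q(K,μ)`: the closure of `A(K)` in `L^q(μ)`, described at the level of functions. -/
def Aq (K : Set ℂ) (q : ℝ≥0∞) (μ : Measure ℂ) : Set (ℂ → ℂ) :=
  {f | MemLp f q μ ∧ ∀ ε : ℝ≥0∞, 0 < ε → ∃ g ∈ AK K, eLpNorm (f - g) q μ < ε}

/-- The set of analytic bounded point evaluations for `A^q(K,μ)`. -/
def abpes (K : Set ℂ) (q : ℝ≥0∞) (μ : Measure ℂ) : Set ℂ :=
  {a | ∃ G ∈ 𝓝 a, ∃ c : ℝ, 0 < c ∧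
    ∀ f ∈ AK K, ∀ l ∈ G, ‖f l‖ ≤ c * (eLpNorm f q μ).toReal}

/-- A function continuous on `K` is a.e. strongly measurable for a measure carried by `K`. -/
lemma AK.aesm {K : Set ℂ} (hK : IsCompact K) {μ : Measure ℂ} (hμ : μ Kᶜ = 0)
    {h : ℂ → ℂ} (hh : h ∈ AK K) : AEStronglyMeasurable h μ := by
  have hmem : ∀ᵐ x ∂μ, x ∈ K := by
    rw [ae_iff]
    exact hμ
  have := hh.1.aestronglyMeasurable (μ := μ) hK.isClosed.measurableSet
  rwa [Measure.restrict_eq_self_of_ae_mem hmem] at this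

/-- Bound on the `L^q` norm of a product with an a.e. bounded function. -/
lemma eLpNorm_mul_le_of_ae_bound {μ : Measure ℂ} {q : ℝ≥0∞} {b h : ℂ → ℂ} {C : ℝ}
    (hC : 0 ≤ C) (hb : ∀ᵐ z ∂μ, ‖b z‖ ≤ C) :
    eLpNorm (b * h) q μ ≤ ENNReal.ofReal C * eLpNorm h q μ := by
  calc eLpNorm (b * h) q μ ≤ eLpNorm (C • h) q μ := by
        refine eLpNorm_mono_ae ?_
        filter_upwards [hb] with z hz
        simp only [Pi.mul_apply, Pi.smul_apply, norm_mul, norm_smul]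
        rw [Real.norm_eq_abs, abs_of_nonneg hC]
        exact mul_le_mul_of_nonneg_right hz (norm_nonneg _)
    _ = ‖C‖₊ • eLpNorm h q μ := eLpNorm_const_smul C h q μ
    _ = ENNReal.ofReal C * eLpNorm h q μ := by
        rw [ENNReal.smul_def, smul_eq_mul, ← Real.toNNReal_eq_nnnorm_of_nonneg hC,
          ENNReal.ofReal]

/-- If `f ∈ L^∞(μ) ∩ A^q(K,μ)` and `g ∈ A^q(K,μ)`, then `fg ∈ A^q(K,μ)`. -/
theorem stmt3 (K : Set ℂ) (hK : IsCompact K) (μ : Measure ℂ) [IsFiniteMeasure μ]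
    (hμ : μ Kᶜ = 0) (q : ℝ≥0∞) (hq1 : 1 ≤ q) (hq2 : q ≠ ∞)
    (f g : ℂ → ℂ) (hf : f ∈ Aq K q μ)
    (hfb : ∃ C : ℝ, ∀ᵐ z ∂μ, ‖f z‖ ≤ C)
    (hg : g ∈ Aq K q μ) :
    f * g ∈ Aq K q μ := by
  obtain ⟨C, hC⟩ := hfb
  have hC' : ∀ᵐ z ∂μ, ‖f z‖ ≤ max C 0 := hC.mono fun z hz => le_trans hz (le_max_left _ _)
  set C₀ : ℝ := max C 0 with hC₀def
  have hC₀ : 0 ≤ C₀ := le_max_right _ _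
  have hmemK : ∀ᵐ x ∂μ, x ∈ K := by rw [ae_iff]; exact hμ
  have hfm : AEStronglyMeasurable f μ := hf.1.aestronglyMeasurable
  have hgm : AEStronglyMeasurable g μ := hg.1.aestronglyMeasurable
  constructor
  · -- Memℒp of the product
    refine MemLp.of_le_mul (c := C₀) hg.1 (hfm.mul hgm) ?_
    filter_upwards [hC'] with z hz
    simp only [Pi.mul_apply, norm_mul]
    exact mul_le_mul_of_nonneg_right hz (norm_nonneg _)
  · intro ε hε
    -- constant for the first approximation
    set c₁ : ℝ≥0∞ := ENNReal.ofReal C₀ + 1 with hc₁def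
    have hc₁0 : c₁ ≠ 0 := by simp [hc₁def]
    have hc₁top : c₁ ≠ ∞ := by simp [hc₁def]
    have hδ₁ : 0 < ε / 2 / c₁ := by
      refine ENNReal.div_pos ?_ hc₁top
      exact (ENNReal.div_pos hε.ne' (by norm_num)).ne'
    obtain ⟨g₁, hg₁AK, hg₁⟩ := hg.2 _ hδ₁
    -- g₁ is bounded on K
    obtain ⟨M, hM⟩ := hK.exists_bound_of_continuousOn hg₁AK.1
    have hM0 : 0 ≤ M ∨ K = ∅ := by
      rcases K.eq_empty_or_nonempty with h | ⟨x, hx⟩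
      · exact Or.inr h
      · exact Or.inl (le_trans (norm_nonneg _) (hM x hx))
    set M₀ : ℝ := max M 0 with hM₀def
    have hM₀ : 0 ≤ M₀ := le_max_right _ _
    have hg₁b : ∀ᵐ z ∂μ, ‖g₁ z‖ ≤ M₀ :=
      hmemK.mono fun z hz => le_trans (hM z hz) (le_max_left _ _)
    set c₂ : ℝ≥0∞ := ENNReal.ofReal M₀ + 1 with hc₂def
    have hc₂0 : c₂ ≠ 0 := by simp [hc₂def]
    have hc₂top : c₂ ≠ ∞ := by simp [hc₂def]
    have hδ₂ : 0 < ε / 2 / c₂ := by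
      refine ENNReal.div_pos ?_ hc₂top
      exact (ENNReal.div_pos hε.ne' (by norm_num)).ne'
    obtain ⟨f₁, hf₁AK, hf₁⟩ := hf.2 _ hδ₂
    refine ⟨f₁ * g₁, ⟨hf₁AK.1.mul hg₁AK.1, hf₁AK.2.mul hg₁AK.2⟩, ?_⟩
    -- measurability facts
    have hg₁m : AEStronglyMeasurable g₁ μ := AK.aesm hK hμ hg₁AK
    have hf₁m : AEStronglyMeasurable f₁ μ := AK.aesm hK hμ hf₁AK
    -- first term: ‖f(g - g₁)‖ < ε/2
    have h1 : eLpNorm (f * g - f * g₁) q μ < ε / 2 := by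
      have heq : f * g - f * g₁ = f * (g - g₁) := by ring
      rw [heq]
      calc eLpNorm (f * (g - g₁)) q μ
          ≤ ENNReal.ofReal C₀ * eLpNorm (g - g₁) q μ := eLpNorm_mul_le_of_ae_bound hC₀ hC'
        _ ≤ c₁ * eLpNorm (g - g₁) q μ := by
            gcongr; exact le_self_add
        _ < c₁ * (ε / 2 / c₁) := by
            rw [ENNReal.mul_lt_mul_iff_right hc₁0 hc₁top]; exact hg₁
        _ = ε / 2 := ENNReal.mul_div_cancel hc₁0 hc₁top
    -- second term: ‖(f - f₁)g₁‖ < ε/2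
    have h2 : eLpNorm (f * g₁ - f₁ * g₁) q μ < ε / 2 := by
      have heq : f * g₁ - f₁ * g₁ = g₁ * (f - f₁) := by ring
      rw [heq]
      calc eLpNorm (g₁ * (f - f₁)) q μ
          ≤ ENNReal.ofReal M₀ * eLpNorm (f - f₁) q μ := eLpNorm_mul_le_of_ae_bound hM₀ hg₁b
        _ ≤ c₂ * eLpNorm (f - f₁) q μ := by
            gcongr; exact le_self_add
        _ < c₂ * (ε / 2 / c₂) := by
            rw [ENNReal.mul_lt_mul_iff_right hc₂0 hc₂top]; exact hf₁
        _ = ε / 2 := ENNReal.mul_div_cancel hc₂0 hc₂top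
    have hsplit : f * g - f₁ * g₁ = (f * g - f * g₁) + (f * g₁ - f₁ * g₁) := by ring
    calc eLpNorm (f * g - f₁ * g₁) q μ
        ≤ eLpNorm (f * g - f * g₁) q μ + eLpNorm (f * g₁ - f₁ * g₁) q μ := by
          rw [hsplit]
          exact eLpNorm_add_le ((hfm.mul hgm).sub (hfm.mul hg₁m))
            ((hfm.mul hg₁m).sub (hf₁m.mul hg₁m)) hq1
      _ < ε / 2 + ε / 2 := ENNReal.add_lt_add h1 h2
      _ = ε := ENNReal.add_halves ε
end
end

section
/- Let K ⊂ ℂ be compact, μ a positive finite measure on K, and 1 ≤ q < ∞. For every f ∈ A^q(K,μ), the analytic extension f̂ agrees with f almost everywhere [μ] on the open set ∇A^q(K,μ) of analytic bounded point evaluations. -/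
open MeasureTheory Filter Topology Set ENNReal

noncomputable section

/-- For every `f ∈ A^q(K,μ)`, the analytic extension `f̂` (the pointwise limit on the set
of abpes of any sequence in `A(K)` converging to `f` in `L^q(μ)`) agrees with `f`
a.e. `[μ]` on the open set `∇A^q(K,μ)` of analytic bounded point evaluations. -/
theorem stmt5 (K : Set ℂ) (hK : IsCompact K) (μ : Measure ℂ) [IsFiniteMeasure μ]
    (hμ : μ Kᶜ = 0) (q : ℝ≥0∞) (hq1 : 1 ≤ q) (hq2 : q ≠ ∞)
    (f F : ℂ → ℂ) (hf : f ∈ Aq K q μ) (fn : ℕ → ℂ → ℂ)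
    (hfn : ∀ n, fn n ∈ AK K)
    (hconv : Tendsto (fun n => eLpNorm (f - fn n) q μ) atTop (𝓝 0))
    (hF : ∀ a ∈ abpes K q μ, Tendsto (fun n => fn n a) atTop (𝓝 (F a))) :
    ∀ᵐ z ∂μ, z ∈ abpes K q μ → F z = f z := by
  have hK' : μ.restrict K = μ :=
    Measure.restrict_eq_self_of_ae_mem (by
      rw [MeasureTheory.ae_iff]; exact hμ)
  have hmeas : ∀ n, AEStronglyMeasurable (fn n) μ := fun n => by
    have := ((hfn n).1).aestronglyMeasurable (μ := μ) hK.measurableSet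
    rwa [hK'] at this
  have hconv' : Tendsto (fun n => eLpNorm (fn n - f) q μ) atTop (𝓝 0) := by
    simpa [eLpNorm_sub_comm] using hconv
  have hq0 : q ≠ 0 := by positivity
  have htm := MeasureTheory.tendstoInMeasure_of_tendsto_eLpNorm hq0 hmeas
    hf.1.aestronglyMeasurable hconv'
  obtain ⟨ns, hns, hae⟩ := htm.exists_seq_tendsto_ae
  filter_upwards [hae] with z hz hzab
  have h1 : Tendsto (fun i => fn (ns i) z) atTop (𝓝 (F z)) :=
    (hF z hzab).comp hns.tendsto_atTop
  exact tendsto_nhds_unique h1 hz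
end
end

section
/- Let K ⊂ ℂ be compact and ν a finite complex measure supported in K that annihilates A(K). Let U be a connected component of K° \ supp(ν). If the Cauchy transform ν̂(a) = ∫ dν(w)/(a - w)... is nonzero at some point a ∈ U, then every point λ of U near which ν̂ is nonvanishing is an analytic bounded point evaluation for A^1(K,|ν|); in particular, whenever ν̂(λ) ≠ 0 and λ ∈ U, there exist a neighborhood D of λ and c > 0 with |f(z)| ≤ c‖f‖_{L^1(|ν|)} for all f ∈ A(K) and z ∈ D. -/
open MeasureTheory Filter Topology Set ENNReal

noncomputable section

/-- Let `ν = h dρ` be a finite complex measure supported in `K` (vanishing off the closed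
set `S`) annihilating `A(K)`, and let `U` be the connected component of `K° \ S`
containing `a₀`. If the Cauchy transform of `ν` is nonzero at `a₀ ∈ U`, then every
`λ ∈ U` with `ν̂(λ) ≠ 0` is an analytic bounded point evaluation for `A^1(K,|ν|)`. -/
theorem stmt7 (K : Set ℂ) (hK : IsCompact K) (ρ : Measure ℂ) [IsFiniteMeasure ρ]
    (hρ : ρ Kᶜ = 0) (h : ℂ → ℂ) (hint : Integrable h ρ)
    (hann : ∀ f ∈ AK K, ∫ z, f z * h z ∂ρ = 0)
    (S : Set ℂ) (hS : IsClosed S) (hSsupp : ∀ᵐ z ∂ρ, h z ≠ 0 → z ∈ S)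
    (a0 : ℂ) (ha0 : a0 ∈ interior K \ S)
    (U : Set ℂ) (hU : U = connectedComponentIn (interior K \ S) a0)
    (hnz : (∫ w, h w / (a0 - w) ∂ρ) ≠ 0) :
    ∀ l ∈ U, (∫ w, h w / (l - w) ∂ρ) ≠ 0 →
      l ∈ abpes K 1 (ρ.withDensity (fun z => (‖h z‖₊ : ℝ≥0∞))) := by
  intro l hlU hl
  have hlKS : l ∈ interior K \ S :=
    connectedComponentIn_subset (interior K \ S) a0 (hU ▸ hlU)
  have hopen : IsOpen (interior K \ S) := isOpen_interior.sdiff hS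
  obtain ⟨ε, hε, hball⟩ := Metric.isOpen_iff.mp hopen l hlKS
  set r : ℝ := ε / 2 with hr_def
  have hr : 0 < r := by positivity
  -- basic facts
  have hρK : ∀ᵐ z ∂ρ, z ∈ K := by
    rw [ae_iff]
    exact hρ
  have hrestrict : ρ.restrict K = ρ := Measure.restrict_eq_self_of_ae_mem hρK
  have hKmeas : MeasurableSet K := hK.isClosed.measurableSet
  -- points of the small ball are in interior K \ S, and are r-far from S
  have hball2 : Metric.ball l r ⊆ interior K \ S := by
    refine Subset.trans (Metric.ball_subset_ball ?_) hball
    simp [hr_def]; linarith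
  have hfar : ∀ a ∈ Metric.ball l r, ∀ w ∈ S, r ≤ ‖a - w‖ := by
    intro a ha w hw
    by_contra hcon
    push_neg at hcon
    have : w ∈ Metric.ball l ε := by
      have h1 : dist w a < r := by
        rw [dist_comm, dist_eq_norm]; exact hcon
      have h2 : dist a l < r := ha
      calc dist w l ≤ dist w a + dist a l := dist_triangle _ _ _
        _ < r + r := by linarith
        _ = ε := by rw [hr_def]; ring
    exact (hball this).2 hw
  -- measurability of the kernels
  have hmeas : ∀ a : ℂ, AEStronglyMeasurable (fun w => h w / (a - w)) ρ := by
    intro a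
    exact (hint.aemeasurable.div
      ((measurable_const.sub measurable_id).aemeasurable)).aestronglyMeasurable
  -- a.e. bound on the kernel
  have hbnd : ∀ a ∈ Metric.ball l r, ∀ᵐ w ∂ρ, ‖h w / (a - w)‖ ≤ r⁻¹ * ‖h w‖ := by
    intro a ha
    filter_upwards [hSsupp] with w hw
    by_cases hw0 : h w = 0
    · simp [hw0]
    · have hwS := hw hw0
      have hru : r ≤ ‖a - w‖ := hfar a ha w hwS
      rw [norm_div, div_eq_inv_mul]
      gcongr
  have hker_int : ∀ a ∈ Metric.ball l r, Integrable (fun w => h w / (a - w)) ρ := by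
    intro a ha
    exact Integrable.mono' (hint.norm.const_mul r⁻¹) (hmeas a) (hbnd a ha)
  -- the Cauchy transform and its continuity at l
  set F : ℂ → ℂ := fun a => ∫ w, h w / (a - w) ∂ρ with hF_def
  have hFl : F l ≠ 0 := hl
  have hcontF : ContinuousAt F l := by
    apply continuousAt_of_dominated (bound := fun w => r⁻¹ * ‖h w‖)
    · exact Eventually.of_forall fun a => hmeas a
    · filter_upwards [Metric.ball_mem_nhds l hr] with a ha using hbnd a ha
    · exact hint.norm.const_mul r⁻¹
    · filter_upwards [hSsupp] with w hw
      by_cases hw0 : h w = 0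
      · have : (fun a : ℂ => h w / (a - w)) = fun _ => 0 := by
          funext a; simp [hw0]
        rw [this]; exact continuousAt_const
      · have hlw : l - w ≠ 0 := by
          refine sub_ne_zero.mpr ?_
          intro hcon
          exact hlKS.2 (hcon ▸ hw hw0)
        exact ContinuousAt.div continuousAt_const
          (continuousAt_id.sub continuousAt_const) hlw
  -- the neighborhood
  set m : ℝ := ‖F l‖ with hm_def
  have hm : 0 < m := norm_pos_iff.mpr hFl
  set G : Set ℂ := Metric.ball l r ∩ {a | m / 2 < ‖F a‖} with hG_def
  have hGmem : G ∈ 𝓝 l := by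
    apply inter_mem (Metric.ball_mem_nhds l hr)
    have hopen' : IsOpen {x : ℂ | m / 2 < ‖x‖} :=
      isOpen_lt continuous_const continuous_norm
    have : F ⁻¹' {x : ℂ | m / 2 < ‖x‖} ∈ 𝓝 l :=
      hcontF.preimage_mem_nhds (hopen'.mem_nhds (by simp only [mem_setOf_eq]; linarith))
    exact this
  refine ⟨G, hGmem, 2 / (m * r), by positivity, ?_⟩
  intro f hf a haG
  obtain ⟨haball, haF⟩ := haG
  have haK : a ∈ interior K := (hball2 haball).1
  have haS : a ∉ S := (hball2 haball).2
  -- bound for f on K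
  obtain ⟨C, hC⟩ := hK.exists_bound_of_continuousOn hf.1
  have hC0 : 0 ≤ C := le_trans (norm_nonneg _) (hC l (interior_subset hlKS.1))
  -- measurability of f
  have hfmeas : AEStronglyMeasurable f ρ := by
    have h1 : AEStronglyMeasurable f (ρ.restrict K) := hf.1.aestronglyMeasurable hKmeas
    rwa [hrestrict] at h1
  -- integrability of f * h
  have hfh_int : Integrable (fun w => f w * h w) ρ := by
    refine Integrable.mono' (hint.norm.const_mul C)
      (hfmeas.mul hint.aestronglyMeasurable) ?_
    filter_upwards [hρK] with w hwK
    rw [norm_mul]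
    exact mul_le_mul_of_nonneg_right (hC w hwK) (norm_nonneg _)
  -- integrability of f * h / (a - ·)
  have hfhk_meas : AEStronglyMeasurable (fun w => f w * h w / (a - w)) ρ :=
    ((hfmeas.mul hint.aestronglyMeasurable).aemeasurable.div
      ((measurable_const.sub measurable_id).aemeasurable)).aestronglyMeasurable
  have hfhk_bnd : ∀ᵐ w ∂ρ, ‖f w * h w / (a - w)‖ ≤ r⁻¹ * ‖f w * h w‖ := by
    filter_upwards [hSsupp] with w hw
    by_cases hw0 : h w = 0
    · simp [hw0]
    · have hru : r ≤ ‖a - w‖ := hfar a haball w (hw hw0)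
      rw [norm_div, div_eq_inv_mul]
      gcongr
  have hfhk_int : Integrable (fun w => f w * h w / (a - w)) ρ :=
    Integrable.mono' (hfh_int.norm.const_mul r⁻¹) hfhk_meas hfhk_bnd
  -- the key identity via the annihilation hypothesis applied to dslope f a
  have hgAK : dslope f a ∈ AK K := by
    constructor
    · intro w hwK
      rcases eq_or_ne w a with rfl | hwa
      · exact (continuousAt_dslope_same.mpr
          (hf.2.differentiableAt (isOpen_interior.mem_nhds haK))).continuousWithinAt
      · exact (continuousWithinAt_dslope_of_ne hwa).mpr (hf.1 w hwK)
    · exact (Complex.differentiableOn_dslope (isOpen_interior.mem_nhds haK)).mpr hf.2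
  have h0 := hann _ hgAK
  have haeq : ∀ᵐ w ∂ρ, dslope f a w * h w
      = f a * (h w / (a - w)) - f w * h w / (a - w) := by
    filter_upwards [hSsupp] with w hw
    by_cases hw0 : h w = 0
    · simp [hw0]
    · have hwa : w ≠ a := by
        intro hcon
        exact haS (hcon ▸ hw hw0)
      have haw : a - w ≠ 0 := sub_ne_zero.mpr (Ne.symm hwa)
      have hwa' : w - a ≠ 0 := sub_ne_zero.mpr hwa
      rw [dslope_of_ne f hwa, slope_def_field]
      field_simp
      ring
  rw [integral_congr_ae haeq,
    integral_sub ((hker_int a haball).const_mul (f a)) hfhk_int,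
    integral_const_mul, sub_eq_zero] at h0
  -- h0 : ∫ f w * h w / (a - w) = f a * F a
  -- norm estimate
  have hInorm : ‖∫ w, f w * h w / (a - w) ∂ρ‖ ≤ r⁻¹ * ∫ w, ‖f w * h w‖ ∂ρ := by
    calc ‖∫ w, f w * h w / (a - w) ∂ρ‖ ≤ ∫ w, ‖f w * h w / (a - w)‖ ∂ρ :=
          norm_integral_le_integral_norm _
      _ ≤ ∫ w, r⁻¹ * ‖f w * h w‖ ∂ρ :=
          integral_mono_ae hfhk_int.norm (hfh_int.norm.const_mul r⁻¹) hfhk_bnd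
      _ = r⁻¹ * ∫ w, ‖f w * h w‖ ∂ρ := integral_const_mul _ _
  -- identify the integral with the L¹ norm against the measure
  have hN : ∫ w, ‖f w * h w‖ ∂ρ
      = (eLpNorm f 1 (ρ.withDensity fun z => (‖h z‖₊ : ℝ≥0∞))).toReal := by
    rw [eLpNorm_one_eq_lintegral_enorm]
    rw [lintegral_withDensity_eq_lintegral_mul₀
        (by have := hint.aemeasurable; fun_prop : AEMeasurable (fun z => (‖h z‖₊ : ℝ≥0∞)) ρ)
        (by have := hfmeas.aemeasurable; fun_prop : AEMeasurable (fun x => ‖f x‖ₑ) ρ)]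
    rw [integral_norm_eq_lintegral_enorm (f := fun w => f w * h w)
      (hfmeas.mul hint.aestronglyMeasurable)]
    congr 1
    apply lintegral_congr
    intro w
    simp [Pi.mul_apply, nnnorm_mul, ENNReal.coe_mul, mul_comm, enorm_eq_nnnorm]
  -- conclude
  have hFa : m / 2 < ‖F a‖ := haF
  have hfa : ‖f a‖ * ‖F a‖ = ‖∫ w, f w * h w / (a - w) ∂ρ‖ := by
    rw [← h0, norm_mul]
  have hNnn : 0 ≤ ∫ w, ‖f w * h w‖ ∂ρ := integral_nonneg fun w => norm_nonneg _
  have key : ‖f a‖ ≤ 2 / (m * r) * ∫ w, ‖f w * h w‖ ∂ρ := by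
    have h1 : ‖f a‖ * (m / 2) ≤ ‖f a‖ * ‖F a‖ :=
      mul_le_mul_of_nonneg_left hFa.le (norm_nonneg _)
    have h2 : ‖f a‖ * ‖F a‖ ≤ r⁻¹ * ∫ w, ‖f w * h w‖ ∂ρ := hfa ▸ hInorm
    have h3 : ‖f a‖ * (m / 2) ≤ r⁻¹ * ∫ w, ‖f w * h w‖ ∂ρ := h1.trans h2
    have heq : 2 / (m * r) * ∫ w, ‖f w * h w‖ ∂ρ
        = (r⁻¹ * ∫ w, ‖f w * h w‖ ∂ρ) / (m / 2) := by
      field_simp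
    rw [heq]
    exact (le_div_iff₀ (half_pos hm)).mpr h3
  rw [← hN]
  exact key
end
end

section
/- Let μ be a positive finite Borel measure with support in a compact set K ⊂ ℂ, 1 ≤ q < ∞, and let U be a connected component of K° \ supp(μ). If U contains at least one analytic bounded point evaluation for A^q(K,μ), then every point of U is an analytic bounded point evaluation for A^q(K,μ). -/
open MeasureTheory Filter Topology Set ENNReal

noncomputable section

/-- The (closed) support of a measure on `ℂ`. -/
def msupp (μ : Measure ℂ) : Set ℂ :=
  {x | ∀ o : Set ℂ, IsOpen o → x ∈ o → 0 < μ o}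

lemma isClosed_msupp (μ : Measure ℂ) : IsClosed (msupp μ) := by
  rw [← isOpen_compl_iff, isOpen_iff_mem_nhds]
  intro x hx
  simp only [msupp, mem_compl_iff, mem_setOf_eq] at hx
  push_neg at hx
  obtain ⟨o, ho, hxo, hno⟩ := hx
  refine Filter.mem_of_superset (ho.mem_nhds hxo) (fun y hy => ?_)
  simp only [msupp, mem_compl_iff, mem_setOf_eq]
  push_neg
  exact ⟨o, ho, hy, hno⟩

lemma msupp_compl_null (μ : Measure ℂ) : μ (msupp μ)ᶜ = 0 := by
  apply measure_null_of_locally_null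
  intro x hx
  simp only [msupp, mem_compl_iff, mem_setOf_eq] at hx
  push_neg at hx
  obtain ⟨o, ho, hxo, hno⟩ := hx
  exact ⟨o, mem_nhdsWithin_of_mem_nhds (ho.mem_nhds hxo), le_antisymm hno zero_le⟩

lemma AK_zero (K : Set ℂ) : (0 : ℂ → ℂ) ∈ AK K :=
  ⟨continuousOn_const, differentiableOn_const 0⟩

lemma AK_add {K : Set ℂ} {f g : ℂ → ℂ} (hf : f ∈ AK K) (hg : g ∈ AK K) : f + g ∈ AK K :=
  ⟨hf.1.add hg.1, hf.2.add hg.2⟩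

lemma AK_smul {K : Set ℂ} (a : ℂ) {f : ℂ → ℂ} (hf : f ∈ AK K) : a • f ∈ AK K :=
  ⟨hf.1.const_smul a, hf.2.const_smul a⟩

lemma AK_sub {K : Set ℂ} {f g : ℂ → ℂ} (hf : f ∈ AK K) (hg : g ∈ AK K) : f - g ∈ AK K := by
  have := AK_add hf (AK_smul (-1 : ℂ) hg)
  simpa [sub_eq_add_neg, neg_one_smul] using this

lemma dslope_mem_AK {K : Set ℂ} {f : ℂ → ℂ} (hf : f ∈ AK K) {z : ℂ} (hz : z ∈ interior K) :
    dslope f z ∈ AK K := by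
  have hd : DifferentiableOn ℂ (dslope f z) (interior K) :=
    (Complex.differentiableOn_dslope (isOpen_interior.mem_nhds hz)).mpr hf.2
  refine ⟨fun w hw => ?_, hd⟩
  by_cases hwz : w = z
  · subst hwz
    exact ((hd.differentiableAt (isOpen_interior.mem_nhds hz)).continuousAt).continuousWithinAt
  · have h1 : ContinuousWithinAt (fun u => (u - z)⁻¹ • (f u - f z)) K w := by
      refine ContinuousWithinAt.smul (f := fun u => (u - z)⁻¹) ?_ ((hf.1 w hw).sub continuousWithinAt_const)
      exact ((continuousWithinAt_id.sub continuousWithinAt_const).inv₀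
        (sub_ne_zero.mpr hwz))
    refine h1.congr_of_eventuallyEq ?_ ?_
    · have hne : {u : ℂ | u ≠ z} ∈ 𝓝[K] w :=
        mem_nhdsWithin_of_mem_nhds (isOpen_ne.mem_nhds hwz)
      filter_upwards [hne] with u hu
      rw [dslope_of_ne f hu, slope_def_field, div_eq_inv_mul, smul_eq_mul]
    · rw [dslope_of_ne f hwz, slope_def_field, div_eq_inv_mul, smul_eq_mul]

lemma memLp_of_continuousOn {K : Set ℂ} (hK : IsCompact K) {μ : Measure ℂ} [IsFiniteMeasure μ]
    (hμ : μ Kᶜ = 0) {q : ℝ≥0∞} {f : ℂ → ℂ} (hf : ContinuousOn f K) : MemLp f q μ := by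
  obtain ⟨C, hC⟩ := hK.exists_bound_of_continuousOn hf
  have haeK : ∀ᵐ w ∂μ, w ∈ K := by
    rw [ae_iff]; exact hμ
  have hmeas : AEStronglyMeasurable f μ := by
    have h1 : AEStronglyMeasurable f (μ.restrict K) :=
      hf.aestronglyMeasurable hK.measurableSet
    rwa [Measure.restrict_eq_self_of_ae_mem haeK] at h1
  exact MemLp.of_bound hmeas C (haeK.mono fun w hw => hC w hw)

set_option maxHeartbeats 1600000 in
/-- If `U` is a connected component of `K° \ supp(μ)` containing at least one analytic
bounded point evaluation for `A^q(K,μ)`, then every point of `U` is an abpe. -/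
theorem stmt14 (K : Set ℂ) (hK : IsCompact K) (μ : Measure ℂ) [IsFiniteMeasure μ]
    (hμ : μ Kᶜ = 0) (q : ℝ≥0∞) (hq1 : 1 ≤ q) (hq2 : q ≠ ∞)
    (a0 : ℂ) (ha0 : a0 ∈ interior K \ msupp μ)
    (U : Set ℂ) (hU : U = connectedComponentIn (interior K \ msupp μ) a0)
    (hex : ∃ b ∈ U, b ∈ abpes K q μ) :
    U ⊆ abpes K q μ := by
  classical
  haveI fq : Fact (1 ≤ q) := ⟨hq1⟩
  obtain ⟨b, hbU, G0, hG0, c, hc0, hcb⟩ := hex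
  have hbG0 : b ∈ G0 := mem_of_mem_nhds hG0
  have hSnull : μ (msupp μ)ᶜ = 0 := msupp_compl_null μ
  have haeS : ∀ᵐ w ∂μ, w ∈ msupp μ := by
    rw [ae_iff]; exact hSnull
  have hUopen : IsOpen U := by
    rw [hU]
    exact (isOpen_interior.sdiff (isClosed_msupp μ)).connectedComponentIn
  have hUsub : U ⊆ interior K \ msupp μ := by
    rw [hU]; exact connectedComponentIn_subset _ _
  have hUK : ∀ {z}, z ∈ U → z ∈ interior K := fun hz => (hUsub hz).1
  have hUS : ∀ {z}, z ∈ U → z ∉ msupp μ := fun hz => (hUsub hz).2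
  have hUconn : IsPreconnected U := by
    rw [hU]; exact isPreconnected_connectedComponentIn
  have memAK : ∀ {f : ℂ → ℂ}, f ∈ AK K → MemLp f q μ :=
    fun hf => memLp_of_continuousOn hK hμ hf.1
  -- evaluation at b is well defined on L^q classes
  have hval : ∀ (f₁ f₂ : ℂ → ℂ) (h1 : f₁ ∈ AK K) (h2 : f₂ ∈ AK K),
      (memAK h1).toLp f₁ = (memAK h2).toLp f₂ → f₁ b = f₂ b := by
    intro f₁ f₂ h1 h2 heq
    have hae : f₁ =ᵐ[μ] f₂ := ((memAK h1).toLp_eq_toLp_iff (memAK h2)).mp heq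
    have h0 : eLpNorm (f₁ - f₂) q μ = 0 := by
      have : (f₁ - f₂ : ℂ → ℂ) =ᵐ[μ] 0 := by
        filter_upwards [hae] with w hw
        simp [hw]
      rw [eLpNorm_congr_ae this, eLpNorm_zero]
    have := hcb (f₁ - f₂) (AK_sub h1 h2) b hbG0
    rw [h0] at this
    simp only [ENNReal.toReal_zero, mul_zero] at this
    have : f₁ b - f₂ b = 0 := by
      have h' := norm_le_zero_iff.mp this
      simpa using h'
    exact sub_eq_zero.mp this
  -- the image of AK in Lp as a submodule
  let V : Submodule ℂ (Lp ℂ q μ) :=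
    { carrier := {g | ∃ f : ℂ → ℂ, ∃ h : f ∈ AK K, g = (memAK h).toLp f}
      add_mem' := by
        rintro g₁ g₂ ⟨f₁, h1, rfl⟩ ⟨f₂, h2, rfl⟩
        exact ⟨f₁ + f₂, AK_add h1 h2, (MemLp.toLp_add _ _).symm⟩
      zero_mem' := ⟨0, AK_zero K, (MemLp.toLp_zero _).symm⟩
      smul_mem' := by
        rintro a g ⟨f, h, rfl⟩
        exact ⟨a • f, AK_smul a h, (MemLp.toLp_const_smul a _).symm⟩ }
  have hVex : ∀ g : V, ∃ f : ℂ → ℂ, ∃ h : f ∈ AK K, (g : Lp ℂ q μ) = (memAK h).toLp f :=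
    fun g => g.2
  choose fV hfV hgV using hVex
  have hval' : ∀ (g : V) (f : ℂ → ℂ) (h : f ∈ AK K),
      (g : Lp ℂ q μ) = (memAK h).toLp f → fV g b = f b := by
    intro g f h hg
    exact hval _ _ (hfV g) h (by rw [← hgV g, hg])
  let e : V →ₗ[ℂ] ℂ :=
    { toFun := fun g => fV g b
      map_add' := by
        intro g₁ g₂
        have h12 : fV (g₁ + g₂) b = (fV g₁ + fV g₂) b := by
          apply hval' (g₁ + g₂) _ (AK_add (hfV g₁) (hfV g₂))
          push_cast
          rw [hgV g₁, hgV g₂, MemLp.toLp_add]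
        simpa using h12
      map_smul' := by
        intro a g
        have h12 : fV (a • g) b = (a • fV g) b := by
          apply hval' (a • g) _ (AK_smul a (hfV g))
          push_cast
          rw [hgV g, MemLp.toLp_const_smul]
        simpa using h12 }
  have he_bound : ∀ g : V, ‖e g‖ ≤ c * ‖g‖ := by
    intro g
    have h1 : ‖fV g b‖ ≤ c * (eLpNorm (fV g) q μ).toReal := hcb _ (hfV g) b hbG0
    have h2 : ‖g‖ = (eLpNorm (fV g) q μ).toReal := by
      have : (g : Lp ℂ q μ) = (memAK (hfV g)).toLp (fV g) := hgV g
      rw [show ‖g‖ = ‖(g : Lp ℂ q μ)‖ from rfl, this, Lp.norm_toLp]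
    rw [h2]
    exact h1
  let e' : V →L[ℂ] ℂ := e.mkContinuous c he_bound
  obtain ⟨φ, hφext, hφnorm⟩ := exists_extension_norm_eq V e'
  have hφc : ‖φ‖ ≤ c := by
    rw [hφnorm]
    exact e.mkContinuous_norm_le hc0.le he_bound
  have hφeval : ∀ (f : ℂ → ℂ) (h : f ∈ AK K), φ ((memAK h).toLp f) = f b := by
    intro f h
    have hg : ((memAK h).toLp f) ∈ V := ⟨f, h, rfl⟩
    have h1 := hφext ⟨_, hg⟩
    rw [h1]
    exact hval' ⟨_, hg⟩ f h rfl
  -- Cauchy kernels as elements of L^q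
  have hrz_meas : ∀ z : ℂ, AEStronglyMeasurable (fun w => (w - z)⁻¹) μ :=
    fun z => ((measurable_id.sub_const z).inv).aestronglyMeasurable
  have hrz_bound : ∀ (z : ℂ) (δ : ℝ), 0 < δ → (∀ w ∈ msupp μ, δ ≤ dist w z) →
      ∀ᵐ w ∂μ, ‖(w - z)⁻¹‖ ≤ δ⁻¹ := by
    intro z δ hδ hd
    filter_upwards [haeS] with w hw
    rw [norm_inv]
    have h1 : δ ≤ ‖w - z‖ := by
      have := hd w hw
      rwa [dist_eq_norm] at this
    exact inv_anti₀ hδ h1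
  have hrz_mem : ∀ (z : ℂ) (δ : ℝ), 0 < δ → (∀ w ∈ msupp μ, δ ≤ dist w z) →
      MemLp (fun w => (w - z)⁻¹) q μ := fun z δ hδ hd =>
    MemLp.of_bound (hrz_meas z) δ⁻¹ (hrz_bound z δ hδ hd)
  set F : ℂ → Lp ℂ q μ := fun z =>
    if h : MemLp (fun w => (w - z)⁻¹) q μ then h.toLp _ else 0 with hFdef
  have hF : ∀ {z : ℂ} (h : MemLp (fun w => (w - z)⁻¹) q μ),
      F z = h.toLp (fun w => (w - z)⁻¹) := by
    intro z h
    simp only [hFdef, dif_pos h]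
  -- the measure constant
  set Mq : ℝ := ((μ Set.univ) ^ q.toReal⁻¹).toReal with hMqdef
  have hμfin : (μ Set.univ) ^ q.toReal⁻¹ ≠ ∞ :=
    (ENNReal.rpow_lt_top_of_nonneg (by positivity) (measure_ne_top μ _)).ne
  have heLp_toReal : ∀ (g : ℂ → ℂ) (C : ℝ), 0 ≤ C → (∀ᵐ w ∂μ, ‖g w‖ ≤ C) →
      (eLpNorm g q μ).toReal ≤ Mq * C := by
    intro g C hC hg
    have h1 : eLpNorm g q μ ≤ (μ Set.univ) ^ q.toReal⁻¹ * ENNReal.ofReal C :=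
      eLpNorm_le_of_ae_bound hg
    have h2 := ENNReal.toReal_mono (by finiteness) h1
    rwa [ENNReal.toReal_mul, ENNReal.toReal_ofReal hC] at h2
  -- differentiability of z ↦ φ (F z) on U
  have hFderiv : ∀ z₀ ∈ U, DifferentiableAt ℂ (fun z => φ (F z)) z₀ := by
    intro z₀ hz₀
    obtain ⟨r, hr0, hrU⟩ : ∃ r > (0:ℝ), Metric.closedBall z₀ (2*r) ⊆ U := by
      obtain ⟨ε, hε0, hεU⟩ := Metric.isOpen_iff.mp hUopen z₀ hz₀
      exact ⟨ε/3, by positivity,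
        (Metric.closedBall_subset_ball (by linarith)).trans hεU⟩
    have hgeom : ∀ z ∈ Metric.closedBall z₀ r, ∀ w ∈ msupp μ, r ≤ dist w z := by
      intro z hz w hw
      have hwU : w ∉ Metric.closedBall z₀ (2*r) := fun hmem => hUS (hrU hmem) hw
      rw [Metric.mem_closedBall, not_le] at hwU
      rw [Metric.mem_closedBall] at hz
      have := dist_triangle w z z₀
      have h2 : dist z z₀ ≤ r := hz
      linarith [dist_triangle w z z₀]
    have hmemz : ∀ z ∈ Metric.closedBall z₀ r, MemLp (fun w => (w - z)⁻¹) q μ :=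
      fun z hz => hrz_mem z r hr0 (hgeom z hz)
    have hz₀ball : z₀ ∈ Metric.closedBall z₀ r := Metric.mem_closedBall_self hr0.le
    have hmem2 : MemLp (fun w => ((w - z₀)⁻¹)^2) q μ := by
      refine MemLp.of_bound (((measurable_id.sub_const z₀).inv.pow_const 2).aestronglyMeasurable)
        (r⁻¹^2) ?_
      filter_upwards [hrz_bound z₀ r hr0 (hgeom z₀ hz₀ball)] with w hw
      rw [norm_pow]
      exact pow_le_pow_left₀ (norm_nonneg _) hw 2
    set D : Lp ℂ q μ := hmem2.toLp _ with hDdef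
    have hDer : HasDerivAt F D z₀ := by
      rw [hasDerivAt_iff_isLittleO]
      have hO : (fun z => F z - F z₀ - (z - z₀) • D) =O[𝓝 z₀] (fun z => ‖z - z₀‖^2) := by
        rw [Asymptotics.isBigO_iff]
        refine ⟨Mq * (r⁻¹^3), ?_⟩
        filter_upwards [Metric.closedBall_mem_nhds z₀ hr0] with z hz
        have hmz := hmemz z hz
        have hmz₀ := hmemz z₀ hz₀ball
        have hgmem : MemLp (fun w => (w - z)⁻¹ - (w - z₀)⁻¹ - (z - z₀) * ((w - z₀)⁻¹)^2) q μ :=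
          (hmz.sub hmz₀).sub (by exact hmem2.const_smul (z - z₀))
        have heq : F z - F z₀ - (z - z₀) • D = hgmem.toLp _ := by
          rw [hF hmz, hF hmz₀, hDdef, ← MemLp.toLp_const_smul, ← MemLp.toLp_sub,
            ← MemLp.toLp_sub]
          apply MemLp.toLp_congr
          apply Filter.Eventually.of_forall
          intro w
          simp [smul_eq_mul]
        rw [heq, Lp.norm_toLp]
        have hbound : ∀ᵐ w ∂μ,
            ‖(w - z)⁻¹ - (w - z₀)⁻¹ - (z - z₀) * ((w - z₀)⁻¹)^2‖ ≤ r⁻¹^3 * ‖z - z₀‖^2 := by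
          filter_upwards [haeS] with w hw
          have h1 : r ≤ dist w z := hgeom z hz w hw
          have h2 : r ≤ dist w z₀ := hgeom z₀ hz₀ball w hw
          rw [dist_eq_norm] at h1 h2
          have hwz : w - z ≠ 0 := by
            intro h
            rw [h, norm_zero] at h1
            linarith
          have hwz₀ : w - z₀ ≠ 0 := by
            intro h
            rw [h, norm_zero] at h2
            linarith
          have hiden : (w - z)⁻¹ - (w - z₀)⁻¹ - (z - z₀) * ((w - z₀)⁻¹)^2
              = (z - z₀)^2 * ((w - z)⁻¹ * ((w - z₀)⁻¹)^2) := by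
            field_simp
            ring
          rw [hiden]
          rw [norm_mul, norm_mul, norm_pow, norm_pow, norm_inv, norm_inv]
          have hr1 : ‖w - z‖⁻¹ ≤ r⁻¹ := inv_anti₀ hr0 h1
          have hr2 : ‖w - z₀‖⁻¹ ≤ r⁻¹ := inv_anti₀ hr0 h2
          calc ‖z - z₀‖^2 * (‖w - z‖⁻¹ * (‖w - z₀‖⁻¹)^2)
              ≤ ‖z - z₀‖^2 * (r⁻¹ * (r⁻¹)^2) := by
                apply mul_le_mul_of_nonneg_left _ (by positivity)
                exact mul_le_mul hr1 (pow_le_pow_left₀ (by positivity) hr2 2)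
                  (by positivity) (by positivity)
            _ = r⁻¹^3 * ‖z - z₀‖^2 := by ring
        have h3 := heLp_toReal _ (r⁻¹^3 * ‖z - z₀‖^2) (by positivity) hbound
        calc (eLpNorm (fun w => (w - z)⁻¹ - (w - z₀)⁻¹ - (z - z₀) * ((w - z₀)⁻¹)^2) q μ).toReal
            ≤ Mq * (r⁻¹^3 * ‖z - z₀‖^2) := h3
          _ = Mq * r⁻¹^3 * ‖z - z₀‖^2 := by ring
          _ ≤ Mq * r⁻¹^3 * ‖‖z - z₀‖^2‖ := by
              apply mul_le_mul_of_nonneg_left _ ?_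
              · rw [Real.norm_eq_abs]; exact le_abs_self _
              · exact mul_nonneg (by rw [hMqdef]; exact ENNReal.toReal_nonneg)
                  (by positivity)
      have hlo : (fun z : ℂ => ‖z - z₀‖^2) =o[𝓝 z₀] (fun z => z - z₀) := by
        rw [Asymptotics.isLittleO_iff]
        intro ε hε
        filter_upwards [Metric.closedBall_mem_nhds z₀ hε] with z hz
        rw [Metric.mem_closedBall, dist_eq_norm] at hz
        rw [Real.norm_eq_abs, abs_of_nonneg (by positivity), sq]
        exact mul_le_mul_of_nonneg_right hz (norm_nonneg _)
      exact hO.trans_isLittleO hlo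
    exact (φ.hasFDerivAt.comp_hasDerivAt z₀ hDer).differentiableAt
  -- the analytic function Ψ
  set Ψ : ℂ → ℂ := fun z => (b - z) * φ (F z) - 1 with hΨdef
  have hΨdiffOn : DifferentiableOn ℂ Ψ U := by
    intro z hz
    exact ((((differentiableAt_const b).sub differentiableAt_id).mul (hFderiv z hz)).sub
      (differentiableAt_const 1)).differentiableWithinAt
  have hΨan : AnalyticOnNhd ℂ Ψ U := hΨdiffOn.analyticOnNhd hUopen
  have hΨb : Ψ b = -1 := by simp [hΨdef]
  -- main argument
  intro z₀ hz₀
  have hevne : ∀ᶠ z in 𝓝[≠] z₀, Ψ z ≠ 0 := by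
    by_cases h0 : Ψ z₀ = 0
    · rcases (hΨan z₀ hz₀).eventually_eq_zero_or_eventually_ne_zero with h | h
      · exfalso
        have heq : EqOn Ψ 0 U :=
          hΨan.eqOn_zero_of_preconnected_of_eventuallyEq_zero hUconn hz₀
            (h.mono fun z hz => by simpa using hz)
        have hb0 := heq hbU
        rw [hΨb] at hb0
        norm_num at hb0
      · exact h
    · exact ((hΨan z₀ hz₀).continuousAt.eventually_ne h0).filter_mono nhdsWithin_le_nhds
  rw [eventually_nhdsWithin_iff] at hevne
  obtain ⟨ε₁, hε₁, hevne'⟩ := Metric.eventually_nhds_iff.mp hevne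
  obtain ⟨ε₂, hε₂, hε₂U⟩ := Metric.isOpen_iff.mp hUopen z₀ hz₀
  set db : ℝ := if z₀ = b then 1 else dist z₀ b with hdbdef
  have hdb : 0 < db := by
    rw [hdbdef]
    split_ifs with h
    · norm_num
    · exact dist_pos.mpr h
  set ρ : ℝ := min ε₁ (min ε₂ db) / 3 with hρdef
  have hmin3 : 0 < min ε₁ (min ε₂ db) := lt_min hε₁ (lt_min hε₂ hdb)
  have hρ : 0 < ρ := by rw [hρdef]; linarith
  have hρε₁ : ρ < ε₁ := by
    have := min_le_left ε₁ (min ε₂ db)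
    rw [hρdef]; linarith
  have hρε₂ : 2*ρ < ε₂ := by
    have h1 := (min_le_right ε₁ (min ε₂ db)).trans (min_le_left ε₂ db)
    rw [hρdef]; linarith
  have hρdb : ρ < db := by
    have h1 := (min_le_right ε₁ (min ε₂ db)).trans (min_le_right ε₂ db)
    rw [hρdef]; linarith
  have hball2 : Metric.closedBall z₀ (2*ρ) ⊆ U :=
    (Metric.closedBall_subset_ball (by linarith)).trans hε₂U
  have hgeom : ∀ z ∈ Metric.closedBall z₀ ρ, ∀ w ∈ msupp μ, ρ ≤ dist w z := by
    intro z hz w hw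
    have hwU : w ∉ Metric.closedBall z₀ (2*ρ) := fun hmem => hUS (hball2 hmem) hw
    rw [Metric.mem_closedBall, not_le] at hwU
    rw [Metric.mem_closedBall] at hz
    linarith [dist_triangle w z z₀]
  have hsphU : Metric.sphere z₀ ρ ⊆ U := fun z hz =>
    hball2 ((Metric.sphere_subset_closedBall.trans
      (Metric.closedBall_subset_closedBall (by linarith))) hz)
  have hsph_ne : ∀ z ∈ Metric.sphere z₀ ρ, Ψ z ≠ 0 := by
    intro z hz
    rw [Metric.mem_sphere] at hz
    have hzz₀ : z ≠ z₀ := by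
      intro h
      rw [h, dist_self] at hz
      linarith
    exact hevne' (by rw [hz]; linarith) hzz₀
  have hsph_b : ∀ z ∈ Metric.sphere z₀ ρ, z ≠ b := by
    intro z hz hzb
    rw [Metric.mem_sphere] at hz
    by_cases h : z₀ = b
    · rw [hzb, ← h, dist_self] at hz
      linarith
    · have hdb2 : db = dist z₀ b := by rw [hdbdef, if_neg h]
      rw [hzb, dist_comm] at hz
      rw [hz] at hdb2
      linarith [hρdb]
  have hsph_cont : ContinuousOn (fun z => ‖Ψ z‖) (Metric.sphere z₀ ρ) :=
    (hΨdiffOn.continuousOn.mono hsphU).norm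
  obtain ⟨zm, hzm, hminm⟩ := (isCompact_sphere z₀ ρ).exists_isMinOn
    (NormedSpace.sphere_nonempty.mpr hρ.le) hsph_cont
  set η : ℝ := ‖Ψ zm‖ with hηdef
  have hη : 0 < η := by
    rw [hηdef, norm_pos_iff]
    exact hsph_ne zm hzm
  set R : ℝ := dist b z₀ + ρ with hRdef
  set C₀ : ℝ := (R * (c * ρ⁻¹) + c) / η with hC₀def
  have hsphere : ∀ f ∈ AK K, ∀ z ∈ Metric.sphere z₀ ρ,
      ‖f z‖ ≤ C₀ * (eLpNorm f q μ).toReal := by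
    intro f hf z hz
    have hzU : z ∈ U := hsphU hz
    have hzb : z ≠ b := hsph_b z hz
    have hzball : z ∈ Metric.closedBall z₀ ρ := Metric.sphere_subset_closedBall hz
    have hzK : z ∈ interior K := hUK hzU
    have hmemz : MemLp (fun w => (w - z)⁻¹) q μ := hrz_mem z ρ hρ (hgeom z hzball)
    have hfmem : MemLp f q μ := memAK hf
    have hfae : ∀ᵐ w ∂μ, ‖f w * (w - z)⁻¹‖ ≤ ρ⁻¹ * ‖f w‖ := by
      filter_upwards [hrz_bound z ρ hρ (hgeom z hzball)] with w hw
      rw [norm_mul]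
      calc ‖f w‖ * ‖(w - z)⁻¹‖ ≤ ‖f w‖ * ρ⁻¹ :=
            mul_le_mul_of_nonneg_left hw (norm_nonneg _)
        _ = ρ⁻¹ * ‖f w‖ := mul_comm _ _
    have hfrz : MemLp (fun w => f w * (w - z)⁻¹) q μ :=
      MemLp.of_le_mul hfmem (hfmem.aestronglyMeasurable.mul (hrz_meas z)) hfae
    have hgAK : dslope f z ∈ AK K := dslope_mem_AK hf hzK
    have h2 : (memAK hgAK).toLp (dslope f z)
        = hfrz.toLp _ - (f z) • hmemz.toLp (fun w => (w - z)⁻¹) := by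
      rw [← MemLp.toLp_const_smul, ← MemLp.toLp_sub]
      apply MemLp.toLp_congr
      filter_upwards [haeS] with w hw
      have hwz : w ≠ z := by
        intro h
        rw [h] at hw
        exact hUS hzU hw
      rw [dslope_of_ne f hwz, slope_def_field]
      have hswz : w - z ≠ 0 := sub_ne_zero.mpr hwz
      simp only [Pi.sub_apply, Pi.smul_apply, smul_eq_mul]
      field_simp
    have hA : φ (hfrz.toLp _) - f z * φ (hmemz.toLp _) = (b - z)⁻¹ * (f b - f z) := by
      have h1 : φ ((memAK hgAK).toLp (dslope f z)) = dslope f z b := hφeval _ hgAK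
      rw [h2, map_sub, _root_.map_smul, smul_eq_mul] at h1
      have h3 : dslope f z b = (b - z)⁻¹ * (f b - f z) := by
        rw [dslope_of_ne f (Ne.symm hzb), slope_def_field, div_eq_inv_mul]
      rw [h3] at h1
      exact h1
    have hfzΨ : f z * Ψ z = (b - z) * φ (hfrz.toLp _) - f b := by
      have hbz : b - z ≠ 0 := sub_ne_zero.mpr (Ne.symm hzb)
      have hFz : φ (F z) = φ (hmemz.toLp _) := by rw [hF hmemz]
      have h4 : (b - z) * (φ (hfrz.toLp _) - f z * φ (hmemz.toLp _)) = f b - f z := by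
        rw [hA, ← mul_assoc, mul_inv_cancel₀ hbz, one_mul]
      simp only [hΨdef]
      rw [hFz]
      linear_combination -h4
    have hAb : ‖φ (hfrz.toLp _)‖ ≤ c * (ρ⁻¹ * (eLpNorm f q μ).toReal) := by
      have h5 : ‖φ (hfrz.toLp _)‖ ≤ ‖φ‖ * ‖hfrz.toLp _‖ := φ.le_opNorm _
      have h6 : ‖(hfrz.toLp _ : Lp ℂ q μ)‖ ≤ ρ⁻¹ * (eLpNorm f q μ).toReal := by
        rw [Lp.norm_toLp]
        have h7 : eLpNorm (fun w => f w * (w - z)⁻¹) q μ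
            ≤ eLpNorm (((ρ⁻¹ : ℝ) : ℂ) • f) q μ := by
          apply eLpNorm_mono_ae
          filter_upwards [hfae] with w hw
          rw [Pi.smul_apply, norm_smul, _root_.Complex.norm_real, Real.norm_eq_abs,
            abs_of_pos (by positivity)]
          exact hw
        have h8 : eLpNorm (((ρ⁻¹ : ℝ) : ℂ) • f) q μ
            = (‖((ρ⁻¹ : ℝ) : ℂ)‖₊ : ℝ≥0∞) * eLpNorm f q μ := eLpNorm_const_smul _ _ _ _
        have h9 : (‖((ρ⁻¹ : ℝ) : ℂ)‖₊ : ℝ≥0∞) * eLpNorm f q μ ≠ ∞ :=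
          ENNReal.mul_ne_top ENNReal.coe_ne_top hfmem.2.ne
        have h10 := ENNReal.toReal_mono h9 (h7.trans_eq h8)
        rwa [ENNReal.toReal_mul, ENNReal.coe_toReal, coe_nnnorm,
          _root_.Complex.norm_real, Real.norm_eq_abs, abs_of_pos (by positivity)] at h10
      calc ‖φ (hfrz.toLp _)‖ ≤ ‖φ‖ * ‖hfrz.toLp _‖ := h5
        _ ≤ c * (ρ⁻¹ * (eLpNorm f q μ).toReal) := by
            apply mul_le_mul hφc h6 (norm_nonneg _) hc0.le
    have hfb : ‖f b‖ ≤ c * (eLpNorm f q μ).toReal := hcb f hf b hbG0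
    have hΨz : η ≤ ‖Ψ z‖ := hminm hz
    have hbzR : ‖b - z‖ ≤ R := by
      rw [hRdef, ← dist_eq_norm]
      calc dist b z ≤ dist b z₀ + dist z₀ z := dist_triangle _ _ _
        _ = dist b z₀ + ρ := by
            rw [dist_comm z₀ z, Metric.mem_sphere.mp hz]
    have hmain : ‖f z‖ * η ≤ (R * (c * ρ⁻¹) + c) * (eLpNorm f q μ).toReal := by
      calc ‖f z‖ * η ≤ ‖f z‖ * ‖Ψ z‖ := mul_le_mul_of_nonneg_left hΨz (norm_nonneg _)
        _ = ‖f z * Ψ z‖ := (norm_mul _ _).symm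
        _ = ‖(b - z) * φ (hfrz.toLp _) - f b‖ := by rw [hfzΨ]
        _ ≤ ‖(b - z) * φ (hfrz.toLp _)‖ + ‖f b‖ := norm_sub_le _ _
        _ = ‖b - z‖ * ‖φ (hfrz.toLp _)‖ + ‖f b‖ := by rw [norm_mul]
        _ ≤ R * (c * (ρ⁻¹ * (eLpNorm f q μ).toReal)) + c * (eLpNorm f q μ).toReal := by
            gcongr
        _ = (R * (c * ρ⁻¹) + c) * (eLpNorm f q μ).toReal := by ring
    rw [hC₀def, div_mul_eq_mul_div, le_div_iff₀ hη]
    exact hmain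
  have hmax : ∀ f ∈ AK K, ∀ l ∈ Metric.closedBall z₀ ρ,
      ‖f l‖ ≤ C₀ * (eLpNorm f q μ).toReal := by
    intro f hf l hl
    have hsub1 : Metric.closedBall z₀ ρ ⊆ interior K := fun x hx =>
      hUK (hball2 ((Metric.closedBall_subset_closedBall (by linarith)) hx))
    have hdc : DiffContOnCl ℂ f (Metric.ball z₀ ρ) := by
      refine ⟨hf.2.mono (Metric.ball_subset_closedBall.trans hsub1), ?_⟩
      rw [closure_ball z₀ hρ.ne']
      exact hf.1.mono (hsub1.trans interior_subset)
    have h1 : ∀ w ∈ frontier (Metric.ball z₀ ρ), ‖f w‖ ≤ C₀ * (eLpNorm f q μ).toReal := by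
      rw [frontier_ball z₀ hρ.ne']
      exact fun w hw => hsphere f hf w hw
    have h2 : l ∈ closure (Metric.ball z₀ ρ) := by
      rw [closure_ball z₀ hρ.ne']
      exact hl
    exact Complex.norm_le_of_forall_mem_frontier_norm_le Metric.isBounded_ball hdc h1 h2
  refine ⟨Metric.ball z₀ ρ, Metric.ball_mem_nhds z₀ hρ, max C₀ 1,
    lt_of_lt_of_le one_pos (le_max_right _ _), ?_⟩
  intro f hf l hl
  calc ‖f l‖ ≤ C₀ * (eLpNorm f q μ).toReal :=
        hmax f hf l (Metric.ball_subset_closedBall hl)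
    _ ≤ max C₀ 1 * (eLpNorm f q μ).toReal :=
        mul_le_mul_of_nonneg_right (le_max_left _ _) ENNReal.toReal_nonneg
end
end
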